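/- The direct Hilbert velocity is bounded by the operator norm of the Hamiltonian: if ψ and ξ are unit vectors and H is a bounded self-adjoint operator, then |Im⟨ξ, H ψ⟩| ≤ ‖H‖. Consequently, for the ODE dF/dT = 2√(F(1−F)) ⟨Q⟩_T with ⟨Q⟩_T ≤ Q_max and F(0) = 0, one has F(T) ≤ sin²(min(Q_max T, π/2)), giving the lower bound T_QSL ≥ π/(2 Q_max) on the time to reach F = 1. -/

import Mathlib

/-!
The first claim is Cauchy–Schwarz. For the second, `F = sin² θ` turns the equation into
`θ' = ⟨Q⟩_T ≤ Q_max`, so `F` should stay below `sin² (Q_max T)` until that reaches `1`. Since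
`√(F (1 - F))` is not Lipschitz at `F = 0`, we do not compare with that solution directly but with
the strict barriers `sin² ((Q_max + ε) T + ε)`, which start above `F` and grow strictly faster
wherever they touch it, and then let `ε → 0`. The speed limit follows because `sin² x < 1` for
`0 ≤ x < π / 2`.
-/

open Real Set Filter Topology
open scoped InnerProductSpace

theorem abs_im_inner_apply_le {E E' : Type*} [NormedAddCommGroup E] [InnerProductSpace ℂ E]
    [NormedAddCommGroup E'] [InnerProductSpace ℂ E'] (A : E →L[ℂ] E') (ξ : E') (ψ : E) :
    |(⟪ξ, A ψ⟫_ℂ).im| ≤ ‖ξ‖ * (‖A‖ * ‖ψ‖) :=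
  calc |(⟪ξ, A ψ⟫_ℂ).im| ≤ ‖⟪ξ, A ψ⟫_ℂ‖ := Complex.abs_im_le_norm _
    _ ≤ ‖ξ‖ * ‖A ψ‖ := norm_inner_le_norm _ _
    _ ≤ ‖ξ‖ * (‖A‖ * ‖ψ‖) := by gcongr; exact A.le_opNorm ψ

theorem two_mul_sqrt_sin_sq_mul_one_sub_sin_sq (θ : ℝ) :
    2 * √(sin θ ^ 2 * (1 - sin θ ^ 2)) = |sin (2 * θ)| := by
  rw [← cos_sq', ← mul_pow, sqrt_sq_eq_abs, sin_two_mul, mul_assoc, abs_mul 2, abs_two, abs_mul]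

theorem hasDerivAt_sin_sq_mul_add (a δ t : ℝ) :
    HasDerivAt (fun t ↦ sin (a * t + δ) ^ 2) (a * sin (2 * (a * t + δ))) t := by
  have hlin : HasDerivAt (fun t ↦ a * t + δ) a t := by
    simpa using ((hasDerivAt_id t).const_mul a).add_const δ
  refine (((hasDerivAt_sin _).comp t hlin).pow 2).congr_deriv ?_
  rw [sin_two_mul]
  norm_num
  ring

section SinSqBarrier

variable {F q : ℝ → ℝ} {c : ℝ}
  (hF0 : F 0 = 0) (hF' : ∀ t, 0 ≤ t → HasDerivAt F (2 * √(F t * (1 - F t)) * q t) t)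
  (hq : ∀ t, 0 ≤ t → q t ≤ c)
include hF0 hF' hq

theorem le_sin_sq_mul_add_of_hasDerivAt {a δ T : ℝ} (ha : 0 < a) (hca : c < a) (hδ : 0 < δ)
    (hT : 0 ≤ T) (hTπ : a * T + δ ≤ π / 2) : F T ≤ sin (a * T + δ) ^ 2 := by
  refine image_le_of_deriv_right_lt_deriv_boundary
    (fun x hx ↦ (hF' x hx.1).continuousAt.continuousWithinAt)
    (fun x hx ↦ (hF' x hx.1).hasDerivWithinAt) (by rw [hF0]; positivity)
    (hasDerivAt_sin_sq_mul_add a δ) ?_ ⟨hT, le_rfl⟩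
  intro x ⟨hx0, hxT⟩ hFx
  have hθ0 : 0 < a * x + δ := by positivity
  have hθπ : a * x + δ < π / 2 := by nlinarith
  have hsin : 0 < sin (2 * (a * x + δ)) := sin_pos_of_pos_of_lt_pi (by linarith) (by linarith)
  calc 2 * √(F x * (1 - F x)) * q x = sin (2 * (a * x + δ)) * q x := by
        rw [hFx, two_mul_sqrt_sin_sq_mul_one_sub_sin_sq, abs_of_pos hsin]
    _ ≤ sin (2 * (a * x + δ)) * c := by gcongr; exact hq x hx0
    _ < sin (2 * (a * x + δ)) * a := mul_lt_mul_of_pos_left hca hsin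
    _ = a * sin (2 * (a * x + δ)) := mul_comm _ _

theorem le_sin_sq_min_mul_add_of_hasDerivAt (hF1 : ∀ t, 0 ≤ t → F t ≤ 1) {a δ T : ℝ}
    (ha : 0 < a) (hca : c < a) (hδ : 0 < δ) (hT : 0 ≤ T) :
    F T ≤ sin (min (a * T + δ) (π / 2)) ^ 2 := by
  rcases le_total (a * T + δ) (π / 2) with h | h
  · rw [min_eq_left h]
    exact le_sin_sq_mul_add_of_hasDerivAt hF0 hF' hq ha hca hδ hT h
  · rw [min_eq_right h, sin_pi_div_two, one_pow]
    exact hF1 T hT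

theorem le_sin_sq_min_mul_of_hasDerivAt (hF1 : ∀ t, 0 ≤ t → F t ≤ 1) (hc : 0 ≤ c) {T : ℝ}
    (hT : 0 ≤ T) : F T ≤ sin (min (c * T) (π / 2)) ^ 2 := by
  have hlim : Tendsto (fun ε ↦ sin (min ((c + ε) * T + ε) (π / 2)) ^ 2) (𝓝[>] 0)
      (𝓝 (sin (min (c * T) (π / 2)) ^ 2)) := by
    have hcont : Continuous (fun ε ↦ sin (min ((c + ε) * T + ε) (π / 2)) ^ 2) := by fun_prop
    simpa using (hcont.tendsto 0).mono_left nhdsWithin_le_nhds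
  refine ge_of_tendsto hlim ?_
  filter_upwards [self_mem_nhdsWithin] with ε (hε : 0 < ε)
  exact le_sin_sq_min_mul_add_of_hasDerivAt hF0 hF' hq hF1 (by linarith) (by linarith) hε hT

end SinSqBarrier

theorem sin_sq_lt_one_of_mem_Ioo {x : ℝ} (hx : x ∈ Ioo (-(π / 2)) (π / 2)) : sin x ^ 2 < 1 := by
  have := cos_pos_of_mem_Ioo hx
  rw [sin_sq]
  nlinarith

theorem div_two_mul_le_of_one_le_sin_sq_min {c T : ℝ} (hc : 0 < c) (hT : 0 ≤ T)
    (h : 1 ≤ sin (min (c * T) (π / 2)) ^ 2) : π / (2 * c) ≤ T := by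
  by_contra! hlt
  have hcT : c * T < π / 2 := by
    rw [lt_div_iff₀ (by positivity)] at hlt
    linarith
  rw [min_eq_left hcT.le] at h
  exact (sin_sq_lt_one_of_mem_Ioo ⟨by nlinarith [pi_pos], hcT⟩).not_ge h

theorem direct_hilbert_velocity_bound_and_qsl_general {E : Type*} [NormedAddCommGroup E]
    [InnerProductSpace ℂ E]
    (Hop : E →L[ℂ] E)
    (ψ ξ : E) (hψ : ‖ψ‖ = 1) (hξ : ‖ξ‖ = 1)
    (Qmax : ℝ) (hQmax : 0 < Qmax)
    (Q F : ℝ → ℝ) (hQ : ∀ T, 0 ≤ T → 0 ≤ Q T ∧ Q T ≤ Qmax)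
    (hF0 : F 0 = 0) (hFrange : ∀ T, 0 ≤ T → F T ∈ Set.Icc (0:ℝ) 1)
    (hF' : ∀ T, 0 ≤ T → HasDerivAt F (2 * Real.sqrt (F T * (1 - F T)) * Q T) T) :
    |(⟪ξ, Hop ψ⟫_ℂ).im| ≤ ‖Hop‖ ∧
      (∀ T, 0 ≤ T → F T ≤ Real.sin (min (Qmax * T) (π / 2)) ^ 2) ∧
      (∀ T, 0 ≤ T → F T = 1 → π / (2 * Qmax) ≤ T) := by
  have hbound : ∀ T, 0 ≤ T → F T ≤ sin (min (Qmax * T) (π / 2)) ^ 2 := fun T hT ↦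
    le_sin_sq_min_mul_of_hasDerivAt hF0 hF' (fun t ht ↦ (hQ t ht).2)
      (fun t ht ↦ (hFrange t ht).2) hQmax.le hT
  refine ⟨?_, hbound, fun T hT hFT ↦ ?_⟩
  · simpa [hψ, hξ] using abs_im_inner_apply_le Hop ξ ψ
  · exact div_two_mul_le_of_one_le_sin_sq_min hQmax hT (hFT ▸ hbound T hT)

/-- The direct Hilbert velocity is bounded by the operator norm of the Hamiltonian,
and consequently the ODE dF/dT = 2√(F(1−F))⟨Q⟩_T with ⟨Q⟩_T ≤ Q_max and F(0) = 0 yields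
F(T) ≤ sin²(min(Q_max T, π/2)) and the quantum speed limit bound T_QSL ≥ π/(2Q_max). -/
theorem direct_hilbert_velocity_bound_and_qsl {E : Type*} [NormedAddCommGroup E]
    [InnerProductSpace ℂ E]
    (Hop : E →L[ℂ] E) (hsa : ∀ x y : E, ⟪Hop x, y⟫_ℂ = ⟪x, Hop y⟫_ℂ)
    (ψ ξ : E) (hψ : ‖ψ‖ = 1) (hξ : ‖ξ‖ = 1)
    (Qmax : ℝ) (hQmax : 0 < Qmax)
    (Q F : ℝ → ℝ) (hQ : ∀ T, 0 ≤ T → 0 ≤ Q T ∧ Q T ≤ Qmax)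
    (hF0 : F 0 = 0) (hFrange : ∀ T, 0 ≤ T → F T ∈ Set.Icc (0:ℝ) 1)
    (hF' : ∀ T, 0 ≤ T → HasDerivAt F (2 * Real.sqrt (F T * (1 - F T)) * Q T) T) :
    |(⟪ξ, Hop ψ⟫_ℂ).im| ≤ ‖Hop‖ ∧
      (∀ T, 0 ≤ T → F T ≤ Real.sin (min (Qmax * T) (π / 2)) ^ 2) ∧
      (∀ T, 0 ≤ T → F T = 1 → π / (2 * Qmax) ≤ T) :=
  direct_hilbert_velocity_bound_and_qsl_general Hop ψ ξ hψ hξ Qmax hQmax Q F hQ hF0 hFrange hF'
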